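/- A reduced word over interval letters is commuting (all its letters pairwise commute) if and only if it left-absorbs itself; equivalently, the idempotents of the monoid Γ are exactly the (classes of) commuting words. -/

import Mathlib

structure Letter (N : ℕ) where
  lo : ℕ
  hi : ℕ
  lo_le_hi : lo ≤ hi
  hi_le : hi ≤ N

namespace PS

/-- `t` is a (non-strict) subletter of `s`. -/
def Sub {N : ℕ} (t s : Letter N) : Prop := s.lo ≤ t.lo ∧ t.hi ≤ s.hi

/-- `t` is a proper subletter of `s`. -/
def PSub {N : ℕ} (t s : Letter N) : Prop := Sub t s ∧ t ≠ s

/-- Two letters commute iff they have distance at least 2. -/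
def Comm {N : ℕ} (s t : Letter N) : Prop := s.hi + 2 ≤ t.lo ∨ t.hi + 2 ≤ s.lo

abbrev Word (N : ℕ) := List (Letter N)

/-- Commutation step: swap two adjacent commuting letters. -/
def SwapStep {N : ℕ} (u v : Word N) : Prop :=
  ∃ (x y : Word N) (s t : Letter N),
    Comm s t ∧ u = x ++ s :: t :: y ∧ v = x ++ t :: s :: y

/-- Cancellation step: replace an occurrence `s·t` or `t·s` by `s`, when `t ⊆ s`. -/
def CancelStep {N : ℕ} (u v : Word N) : Prop :=
  ∃ (x y : Word N) (s t : Letter N),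
    Sub t s ∧ (u = x ++ s :: t :: y ∨ u = x ++ t :: s :: y) ∧ v = x ++ s :: y

/-- Splitting step: replace an occurrence `s·s` by a (possibly empty) product of
proper subletters of `s`. -/
def SplitStep {N : ℕ} (u v : Word N) : Prop :=
  ∃ (x y : Word N) (s : Letter N) (l : Word N),
    (∀ t ∈ l, PSub t s) ∧ u = x ++ s :: s :: y ∧ v = x ++ l ++ y

/-- Commutation-equivalence of words. -/
def WEquiv {N : ℕ} : Word N → Word N → Prop := Relation.ReflTransGen SwapStep

/-- Reduction: finitely many commutation and cancellation steps. -/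
def Red {N : ℕ} : Word N → Word N → Prop :=
  Relation.ReflTransGen (fun u v => SwapStep u v ∨ CancelStep u v)

/-- Strong reduction: also allowing splitting steps. -/
def SRed {N : ℕ} : Word N → Word N → Prop :=
  Relation.ReflTransGen (fun u v => SwapStep u v ∨ CancelStep u v ∨ SplitStep u v)

/-- The congruence defining the monoid Γ. -/
def GammaRel {N : ℕ} : Word N → Word N → Prop :=
  Relation.EqvGen (fun u v => SwapStep u v ∨ CancelStep u v)

/-- A word is reduced if there is no pair of occurrences `i ≠ j` with `sᵢ ⊆ sⱼ`
such that `sᵢ` commutes with every letter strictly between them. -/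
def Reduced {N : ℕ} (w : Word N) : Prop :=
  ¬ ∃ (x y z : Word N) (a b : Letter N),
      w = x ++ a :: (y ++ b :: z) ∧
      ((Sub a b ∧ ∀ r ∈ y, Comm a r) ∨ (Sub b a ∧ ∀ r ∈ y, Comm b r))

/-- The letter `s` is left-absorbed by the word `v`. -/
def LAbsLetter {N : ℕ} (s : Letter N) (v : Word N) : Prop :=
  ∃ (x : Word N) (t : Letter N) (y : Word N),
    v = x ++ t :: y ∧ Sub s t ∧ ∀ r ∈ x, Comm s r

/-- The letter `s` is properly left-absorbed by the word `v`. -/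
def PLAbsLetter {N : ℕ} (s : Letter N) (v : Word N) : Prop :=
  ∃ (x : Word N) (t : Letter N) (y : Word N),
    v = x ++ t :: y ∧ PSub s t ∧ ∀ r ∈ x, Comm s r

/-- The letter `s` is right-absorbed by the word `w`. -/
def RAbsLetter {N : ℕ} (s : Letter N) (w : Word N) : Prop :=
  ∃ (x : Word N) (t : Letter N) (y : Word N),
    w = x ++ t :: y ∧ Sub s t ∧ ∀ r ∈ y, Comm s r

/-- The letter `s` is properly right-absorbed by the word `w`. -/
def PRAbsLetter {N : ℕ} (s : Letter N) (w : Word N) : Prop :=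
  ∃ (x : Word N) (t : Letter N) (y : Word N),
    w = x ++ t :: y ∧ PSub s t ∧ ∀ r ∈ y, Comm s r

/-- The word `u` is left-absorbed by `v`. -/
def LAbsWord {N : ℕ} (u v : Word N) : Prop := ∀ s ∈ u, LAbsLetter s v

/-- `v` bites `u` from the right: `v` left-absorbs some letter of the final segment of `u`. -/
def BitesRight {N : ℕ} (v u : Word N) : Prop :=
  ∃ (x : Word N) (s : Letter N) (y : Word N),
    u = x ++ s :: y ∧ (∀ r ∈ y, Comm s r) ∧ LAbsLetter s v

end PS

/-! A commuting word absorbs itself, and `u · u` reduces to `u` by moving each letter of the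
second copy next to its twin and cancelling. Conversely, let `w s` be reduced and self-absorbing.
No letter can be absorbed through itself, so `w` is self-absorbing, hence commuting by induction;
if `s` were absorbed by an earlier letter `t ⊇ s`, then `s` would commute with everything between
`t` and itself, a cancellable pair.

For idempotency, suppose the reduced word `u` does not commute, and take a letter `M` of `u`,
maximal for inclusion, above a letter failing to commute with another. If every letter of `u`
meeting `M` lay inside `M`, reducedness would be violated, so some letter `b` meets `M` without
lying in it, and then no letter of `u` contains both `M` and `b`. For such an undominated
non-commuting pair `(a, b)`, letters containing `a` never commute with letters containing `b`, and a
cancellation only merges two letters of the same kind; so on words in which no letter contains both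
`a` and `b`, the destuttered sequence of kinds is invariant in `Γ`. It is strictly longer for
`u · u` than for `u`. -/

namespace List

variable {α : Type*}

theorem exists_split_of_mem_of_ne {l : List α} {a c : α} (ha : a ∈ l) (hc : c ∈ l)
    (hne : a ≠ c) :
    ∃ A B C, l = A ++ a :: (B ++ c :: C) ∨ l = A ++ c :: (B ++ a :: C) := by
  obtain ⟨X, Y, rfl⟩ := append_of_mem ha
  rcases mem_append.mp hc with hcX | hcY
  · obtain ⟨A, B, rfl⟩ := append_of_mem hcX
    exact ⟨A, B, Y, Or.inr (by simp)⟩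
  · obtain ⟨B, C, rfl⟩ := append_of_mem ((mem_cons.mp hcY).resolve_left hne.symm)
    exact ⟨X, B, C, Or.inl rfl⟩

theorem exists_split_of_not_pairwise {R : α → α → Prop} {l : List α} (h : ¬l.Pairwise R) :
    ∃ A B C x y, l = A ++ x :: (B ++ y :: C) ∧ ¬R x y := by
  obtain ⟨x, y, hxy, hR⟩ : ∃ x y, [x, y] <+ l ∧ ¬R x y := by
    simpa [pairwise_iff_forall_sublist] using h
  obtain ⟨A', D, rfl, hx, hy⟩ := cons_sublist_iff.mp hxy
  obtain ⟨A, B, rfl⟩ := append_of_mem hx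
  obtain ⟨B', C, rfl⟩ := append_of_mem (singleton_sublist.mp hy)
  exact ⟨A, B ++ B', C, x, y, by simp, hR⟩

theorem append_singleton_eq_append_cons {w x y : List α} {s t : α}
    (h : w ++ [s] = x ++ t :: y) :
    (x = w ∧ t = s ∧ y = []) ∨ ∃ y', y = y' ++ [s] ∧ w = x ++ t :: y' := by
  rcases eq_nil_or_concat y with rfl | ⟨y', s', rfl⟩
  · obtain ⟨rfl, h⟩ := append_inj' h rfl
    exact Or.inl ⟨rfl, by simpa using h.symm, rfl⟩
  · rw [concat_eq_append, ← cons_append, ← append_assoc] at h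
    obtain ⟨rfl, h⟩ := append_inj' h rfl
    obtain rfl : s = s' := by simpa using h
    exact Or.inr ⟨y', concat_eq_append .., rfl⟩

variable {R : α → α → Prop} [DecidableRel R]

theorem destutter'_append_cons_cons {c : α} (hc : ¬R c c) (x y : List α) (a : α) :
    (x ++ c :: c :: y).destutter' R a = (x ++ c :: y).destutter' R a := by
  induction x generalizing a with
  | nil => by_cases hac : R a c <;> simp [hac, hc]
  | cons d x ih => by_cases had : R a d <;> simp [had, ih]

theorem destutter_append_cons_cons {c : α} (hc : ¬R c c) (x y : List α) :
    (x ++ c :: c :: y).destutter R = (x ++ c :: y).destutter R := by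
  cases x with
  | nil => simp [destutter_cons', hc]
  | cons d x => simp [destutter_cons', destutter'_append_cons_cons hc]

theorem length_destutter_ne_lt_length_destutter_append_self [DecidableEq α] {l : List α}
    {x y : α} (hx : x ∈ l) (hy : y ∈ l) (hxy : x ≠ y) :
    (l.destutter (· ≠ ·)).length < ((l ++ l).destutter (· ≠ ·)).length := by
  have hchain := isChain_destutter (· ≠ ·) l
  have hsub := destutter_sublist (· ≠ ·) l
  have hne : l.destutter (· ≠ ·) ≠ [] := by
    simpa [destutter_eq_nil] using ne_nil_of_mem hx
  generalize l.destutter (· ≠ ·) = d at *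
  -- `d` is a `≠`-chain in `l`; the second copy of `l` extends it by a letter other than its last.
  obtain ⟨z, hz, hzv⟩ : ∃ z ∈ l, d.getLast hne ≠ z := by
    by_cases hxv : d.getLast hne = x
    · exact ⟨y, hy, hxv ▸ hxy⟩
    · exact ⟨x, hx, hxv⟩
  have hchain' : (d ++ [z]).IsChain (· ≠ ·) :=
    hchain.append (isChain_singleton z) (by simp [getLast?_eq_some_getLast hne, hzv])
  simpa using hchain'.length_le_length_destutter_ne (hsub.append (singleton_sublist.mpr hz))

end List

namespace PS

variable {N : ℕ}

theorem Comm.symm {s t : Letter N} (h : Comm s t) : Comm t s := Or.symm h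

theorem not_comm_self (s : Letter N) : ¬Comm s s := by
  have := s.lo_le_hi
  unfold Comm; omega

theorem Sub.refl (s : Letter N) : Sub s s := ⟨le_rfl, le_rfl⟩

theorem Sub.trans {a b c : Letter N} (h₁ : Sub a b) (h₂ : Sub b c) : Sub a c :=
  ⟨h₂.1.trans h₁.1, h₁.2.trans h₂.2⟩

theorem Comm.of_sub_left {s t r : Letter N} (h : Comm t r) (hst : Sub s t) : Comm s r := by
  obtain ⟨h₁, h₂⟩ := hst
  unfold Comm at *; omega

theorem Comm.of_sub_right {s t r : Letter N} (h : Comm r t) (hst : Sub s t) : Comm r s :=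
  (h.symm.of_sub_left hst).symm

instance : Preorder (Letter N) where
  le := Sub
  le_refl := Sub.refl
  le_trans _ _ _ := Sub.trans

instance : DecidableRel (Sub (N := N)) := fun t s =>
  inferInstanceAs (Decidable (s.lo ≤ t.lo ∧ t.hi ≤ s.hi))

section Reduced

variable {u A B C : Word N} {a b : Letter N}

theorem Reduced.exists_not_comm_left (hu : Reduced u) (h : u = A ++ a :: (B ++ b :: C))
    (hab : Sub a b) : ∃ r ∈ B, ¬Comm a r := by
  by_contra! hB
  exact hu ⟨A, B, C, a, b, h, Or.inl ⟨hab, hB⟩⟩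

theorem Reduced.exists_not_comm_right (hu : Reduced u) (h : u = A ++ a :: (B ++ b :: C))
    (hba : Sub b a) : ∃ r ∈ B, ¬Comm b r := by
  by_contra! hB
  exact hu ⟨A, B, C, a, b, h, Or.inr ⟨hba, hB⟩⟩

theorem Reduced.of_append {w v : Word N} (h : Reduced (w ++ v)) : Reduced w :=
  fun ⟨x, y, z, a, b, hw, hab⟩ => h ⟨x, y, z ++ v, a, b, by simp [hw], hab⟩

end Reduced

theorem labsWord_self_of_pairwise {u : Word N} (h : u.Pairwise Comm) : LAbsWord u u := by
  intro s hs
  obtain ⟨x, y, rfl⟩ := List.append_of_mem hs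
  exact ⟨x, s, y, rfl, Sub.refl s,
    fun r hr => ((List.pairwise_append.mp h).2.2 r hr s List.mem_cons_self).symm⟩

theorem Reduced.pairwise_of_labsWord_self {u : Word N} (hu : Reduced u) (habs : LAbsWord u u) :
    u.Pairwise Comm := by
  induction u using List.reverseRecOn with
  | nil => exact List.Pairwise.nil
  | append_singleton w s ih =>
    have hw : w.Pairwise Comm := ih hu.of_append fun r hr => by
      obtain ⟨x, t, y, heq, hrt, hx⟩ := habs r (by simp [hr])
      rcases List.append_singleton_eq_append_cons heq with ⟨rfl, -, -⟩ | ⟨y', -, hw⟩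
      · exact absurd (hx r hr) (not_comm_self r)
      · exact ⟨x, t, y', hw, hrt, hx⟩
    obtain ⟨x, t, y, heq, hst, hx⟩ := habs s (by simp)
    rcases List.append_singleton_eq_append_cons heq with ⟨rfl, -, -⟩ | ⟨y', -, rfl⟩
    · exact List.pairwise_append.mpr ⟨hw, List.pairwise_singleton _ _,
        fun r hr s' hs' => by rw [List.mem_singleton.mp hs']; exact (hx r hr).symm⟩
    · refine absurd ⟨x, y', [], t, s, by simp, Or.inr ⟨hst, fun r hr => ?_⟩⟩ hu
      exact (List.rel_of_pairwise_cons (List.pairwise_append.mp hw).2.1 hr).of_sub_left hst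

theorem SwapStep.cons {c : Letter N} {u v : Word N} (h : SwapStep u v) :
    SwapStep (c :: u) (c :: v) := by
  obtain ⟨x, y, s, t, hst, rfl, rfl⟩ := h
  exact ⟨c :: x, y, s, t, hst, rfl, rfl⟩

theorem CancelStep.cons {c : Letter N} {u v : Word N} (h : CancelStep u v) :
    CancelStep (c :: u) (c :: v) := by
  obtain ⟨x, y, s, t, hts, hu | hu, rfl⟩ := h <;> subst hu
  · exact ⟨c :: x, y, s, t, hts, Or.inl rfl, rfl⟩
  · exact ⟨c :: x, y, s, t, hts, Or.inr rfl, rfl⟩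

theorem WEquiv.cons {c : Letter N} {u v : Word N} (h : WEquiv u v) : WEquiv (c :: u) (c :: v) :=
  Relation.ReflTransGen.lift (c :: ·) (fun _ _ => SwapStep.cons) _ _ h

theorem WEquiv.red {u v : Word N} (h : WEquiv u v) : Red u v :=
  Relation.ReflTransGen.mono (fun _ _ => Or.inl) _ _ h

theorem Red.cons {c : Letter N} {u v : Word N} (h : Red u v) : Red (c :: u) (c :: v) :=
  Relation.ReflTransGen.lift (c :: ·) (fun _ _ => Or.imp SwapStep.cons CancelStep.cons) _ _ h

theorem Red.gammaRel {u v : Word N} (h : Red u v) : GammaRel u v :=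
  Relation.EqvGen.reflTransGen_le_eqvGen _ _ _ h

theorem wEquiv_append_cons_of_forall_comm {s : Letter N} :
    ∀ {v : Word N} (y : Word N), (∀ r ∈ v, Comm r s) → WEquiv (v ++ s :: y) (s :: (v ++ y))
  | [], _, _ => Relation.ReflTransGen.refl
  | r :: v, y, h =>
    (WEquiv.cons (wEquiv_append_cons_of_forall_comm y fun q hq => h q (by simp [hq]))).tail
      ⟨[], v ++ y, r, s, h r (by simp), rfl, rfl⟩

theorem red_append_self_of_pairwise : ∀ {u : Word N}, u.Pairwise Comm → Red (u ++ u) u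
  | [], _ => Relation.ReflTransGen.refl
  | s :: v, h => by
    obtain ⟨hs, hv⟩ := List.pairwise_cons.mp h
    have hmove : Red (s :: v ++ s :: v) (s :: s :: (v ++ v)) :=
      (wEquiv_append_cons_of_forall_comm v fun r hr => (hs r hr).symm).red.cons
    have hcancel : CancelStep (s :: s :: (v ++ v)) (s :: (v ++ v)) :=
      ⟨[], v ++ v, s, s, Sub.refl s, Or.inl rfl, rfl⟩
    exact (hmove.tail (Or.inr hcancel)).trans (red_append_self_of_pairwise hv).cons

section Invariant

variable (a b : Letter N)

def side (s : Letter N) : Option Bool :=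
  if Sub a s then some false else if Sub b s then some true else none

def Dominated (w : Word N) : Prop := ∃ c ∈ w, Sub a c ∧ Sub b c

def pattern (w : Word N) : List Bool := (w.filterMap (side a b)).destutter (· ≠ ·)

open Classical in
noncomputable def invariant (w : Word N) : Option (List Bool) :=
  if Dominated a b w then none else some (pattern a b w)

variable {a b} {u v : Word N}

theorem sub_or_sub_of_side_ne_none {s : Letter N} (h : side a b s ≠ none) :
    Sub a s ∨ Sub b s := by
  unfold side at h
  split_ifs at h with has hbs
  exacts [Or.inl has, Or.inr hbs, absurd rfl h]

theorem side_eq_none_of_comm (hab : ¬Comm a b) {s t : Letter N} (hst : Comm s t) :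
    side a b s = none ∨ side a b t = none := by
  by_contra! h
  rcases sub_or_sub_of_side_ne_none h.1 with hs | hs <;>
    rcases sub_or_sub_of_side_ne_none h.2 with ht | ht <;>
    have hc := (hst.of_sub_left hs).of_sub_right ht
  exacts [not_comm_self a hc, hab hc, hab hc.symm, not_comm_self b hc]

theorem side_eq_of_sub {s t : Letter N} (hts : Sub t s) (hs : ¬(Sub a s ∧ Sub b s)) {k : Bool}
    (ht : side a b t = some k) : side a b s = some k := by
  have hmono : ∀ p, Sub p t → Sub p s := fun p hp => hp.trans hts
  unfold side at *
  split_ifs at ht ⊢ <;> simp_all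

theorem Dominated.of_forall_exists_sub (h : Dominated a b u)
    (huv : ∀ c ∈ u, ∃ c' ∈ v, Sub c c') : Dominated a b v := by
  obtain ⟨c, hc, hac, hbc⟩ := h
  obtain ⟨c', hc', hcc'⟩ := huv c hc
  exact ⟨c', hc', hac.trans hcc', hbc.trans hcc'⟩

theorem SwapStep.perm (h : SwapStep u v) : u.Perm v := by
  obtain ⟨x, y, s, t, -, rfl, rfl⟩ := h
  exact (List.Perm.swap t s y).append_left x

theorem SwapStep.filterMap_side (hab : ¬Comm a b) (h : SwapStep u v) :
    u.filterMap (side a b) = v.filterMap (side a b) := by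
  obtain ⟨x, y, s, t, hst, rfl, rfl⟩ := h
  rcases side_eq_none_of_comm hab hst with hs | ht <;> simp [List.filterMap_cons, *]

theorem SwapStep.dominated_iff (h : SwapStep u v) : Dominated a b u ↔ Dominated a b v := by
  simp only [Dominated, h.perm.mem_iff]

theorem SwapStep.pattern_eq (hab : ¬Comm a b) (h : SwapStep u v) :
    pattern a b u = pattern a b v := by
  rw [pattern, pattern, h.filterMap_side hab]

theorem CancelStep.dominated_iff (h : CancelStep u v) : Dominated a b u ↔ Dominated a b v := by
  obtain ⟨x, y, s, t, hts, hu, rfl⟩ := h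
  have hmem : ∀ c ∈ u, c = t ∨ c ∈ x ++ s :: y := by
    rcases hu with rfl | rfl <;> simp <;> tauto
  refine ⟨fun hd => hd.of_forall_exists_sub fun c hc => ?_,
    fun hd => hd.of_forall_exists_sub fun c hc => ⟨c, ?_, Sub.refl c⟩⟩
  · rcases hmem c hc with rfl | hc
    exacts [⟨s, by simp, hts⟩, ⟨c, hc, Sub.refl c⟩]
  · rcases hu with rfl | rfl <;> simp at hc ⊢ <;> tauto

theorem CancelStep.pattern_eq (h : CancelStep u v) (hu : ¬Dominated a b u) :
    pattern a b u = pattern a b v := by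
  obtain ⟨x, y, s, t, hts, hu' | hu', rfl⟩ := h <;> subst hu'
  all_goals
    have hs : ¬(Sub a s ∧ Sub b s) := fun hs => hu ⟨s, by simp, hs⟩
    rcases ht : side a b t with _ | k
    · simp [pattern, List.filterMap_cons, ht]
    · simp [pattern, ht, side_eq_of_sub hts hs ht, List.destutter_append_cons_cons]

theorem invariant_eq_of_step (hab : ¬Comm a b) (h : SwapStep u v ∨ CancelStep u v) :
    invariant a b u = invariant a b v := by
  have hD : Dominated a b u ↔ Dominated a b v :=
    h.elim SwapStep.dominated_iff CancelStep.dominated_iff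
  have hP : ¬Dominated a b u → pattern a b u = pattern a b v :=
    h.elim (fun h _ => h.pattern_eq hab) CancelStep.pattern_eq
  by_cases hd : Dominated a b u
  · simp [invariant, hd, hD.mp hd]
  · simp [invariant, hd, mt hD.mpr hd, hP hd]

theorem invariant_eq_of_gammaRel (hab : ¬Comm a b) (h : GammaRel u v) :
    invariant a b u = invariant a b v :=
  congrArg (Quot.lift (invariant a b) fun _ _ => invariant_eq_of_step hab) (Quot.eqvGen_sound h)

end Invariant

theorem Reduced.false_of_sub_apart {u : Word N} (hu : Reduced u) {M : Letter N}
    (hM : ∀ r ∈ u, ¬Comm M r → Sub r M) {A B C : Word N} {x : Letter N} (hx : Sub x M)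
    (h : u = A ++ x :: (B ++ M :: C) ∨ u = A ++ M :: (B ++ x :: C)) : False := by
  induction hB : B.length using Nat.strong_induction_on generalizing A B C x with
  | _ n ih =>
  -- the letter blocking the cancellation of `x` into `M` lies inside `M` and is strictly closer
  obtain ⟨r, hr, hxr⟩ : ∃ r ∈ B, ¬Comm x r :=
    h.elim (hu.exists_not_comm_left · hx) (hu.exists_not_comm_right · hx)
  have hrM : Sub r M := hM r (by rcases h with rfl | rfl <;> simp [hr])
    fun hMr => hxr (hMr.of_sub_left hx)
  obtain ⟨B₁, B₂, rfl⟩ := List.append_of_mem hr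
  rcases h with rfl | rfl
  · exact @ih B₂.length (by simp [← hB]; omega) (A ++ x :: B₁) B₂ C r hrM
      (Or.inl (by simp)) rfl
  · exact @ih B₁.length (by simp [← hB]) A B₁ (B₂ ++ x :: C) r hrM (Or.inr (by simp)) rfl

theorem Reduced.exists_undominated_pair {u : Word N} (hu : Reduced u) (h : ¬u.Pairwise Comm) :
    ∃ a ∈ u, ∃ b ∈ u, ¬Comm a b ∧ ¬Dominated a b u := by
  obtain ⟨A, B, C, x, y, hsplit, hxy⟩ := List.exists_split_of_not_pairwise h
  have hxu : x ∈ u := by simp [hsplit]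
  obtain ⟨M, hxM, hMu, hMmax⟩ := u.finite_toSet.exists_le_maximal hxu
  by_cases hM : ∀ r ∈ u, ¬Comm M r → Sub r M
  · exfalso
    by_cases hxM' : x = M
    · subst hxM'
      exact hu.false_of_sub_apart hM (hM y (by simp [hsplit]) hxy) (Or.inr hsplit)
    · obtain ⟨A', B', C', h'⟩ := List.exists_split_of_mem_of_ne hxu hMu hxM'
      exact hu.false_of_sub_apart hM hxM h'
  · push Not at hM
    obtain ⟨r, hr, hMr, hrM⟩ := hM
    exact ⟨M, hMu, r, hr, hMr, fun ⟨c, hc, hMc, hrc⟩ => hrM (hrc.trans (hMmax hc hMc))⟩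

theorem Reduced.pairwise_of_gammaRel {u : Word N} (hu : Reduced u) (h : GammaRel (u ++ u) u) :
    u.Pairwise Comm := by
  by_contra hnp
  obtain ⟨a, ha, b, hb, hab, hnd⟩ := hu.exists_undominated_pair hnp
  have hnd' : ¬Dominated a b (u ++ u) := by simpa [Dominated] using hnd
  have hpat : pattern a b (u ++ u) = pattern a b u := by
    simpa [invariant, hnd, hnd'] using invariant_eq_of_gammaRel hab h
  have hab' : ¬Sub a b := fun hab' => hnd ⟨b, hb, hab', Sub.refl b⟩
  have hfalse : false ∈ u.filterMap (side a b) :=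
    List.mem_filterMap.mpr ⟨a, ha, by simp [side, Sub.refl]⟩
  have htrue : true ∈ u.filterMap (side a b) :=
    List.mem_filterMap.mpr ⟨b, hb, by simp [side, Sub.refl, hab']⟩
  have hlt : (pattern a b u).length < (pattern a b (u ++ u)).length := by
    rw [pattern, pattern, List.filterMap_append]
    exact List.length_destutter_ne_lt_length_destutter_append_self hfalse htrue
      Bool.false_ne_true
  exact hlt.ne' (congrArg List.length hpat)

end PS

open PS in
/-- A reduced word is commuting iff it left-absorbs itself, iff it is idempotent
in the monoid Γ. -/
theorem commuting_iff_self_absorbing {N : ℕ} (u : Word N) (hu : Reduced u) :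
    (List.Pairwise (Comm (N := N)) u ↔ LAbsWord u u) ∧
    (List.Pairwise (Comm (N := N)) u ↔ GammaRel (u ++ u) u) :=
  ⟨⟨labsWord_self_of_pairwise, hu.pairwise_of_labsWord_self⟩,
    ⟨fun h => (red_append_self_of_pairwise h).gammaRel, hu.pairwise_of_gammaRel⟩⟩
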